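/- arXiv:1406.7397 — 5 statements merged into one kernel-verified Lean document; each statement's English description precedes it below -/
import Mathlib

section
/- Let μ > 0 and let r : ℝ → ℝ³ be a twice differentiable curve with r(t) ≠ 0 for all t that satisfies Newton's inverse-square equation r''(t) = −μ · r(t)/‖r(t)‖³. Then the Laplace–Runge–Lenz vector A(t) = r'(t) × (r(t) × r'(t)) − μ · r(t)/‖r(t)‖ is constant in t. -/
/-!
The BAC–CAB rule `v × (r × v) = ‖v‖² r - ⟪r, v⟫ v` turns the Laplace–Runge–Lenz vector into an
expression that makes sense in any real inner product space. Along a solution of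
`r'' = -μ r / ‖r‖³` its derivative is a combination of `r` and `r'` whose coefficients both vanish,
since `(μ / ‖r‖³) ‖r‖² = μ / ‖r‖`.
-/

noncomputable def cross3 (a b : EuclideanSpace ℝ (Fin 3)) : EuclideanSpace ℝ (Fin 3) :=
  (WithLp.equiv 2 (Fin 3 → ℝ)).symm
    ![a 1 * b 2 - a 2 * b 1, a 2 * b 0 - a 0 * b 2, a 0 * b 1 - a 1 * b 0]

open RealInnerProductSpace

theorem cross3_self_cross3 (u v : EuclideanSpace ℝ (Fin 3)) :
    cross3 u (cross3 v u) = ‖u‖ ^ 2 • v - ⟪v, u⟫ • u := by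
  ext i
  fin_cases i <;>
    simp only [cross3, WithLp.equiv_symm_apply, Matrix.cons_val, Matrix.cons_val_zero,
      Matrix.cons_val_one, Fin.isValue, Fin.zero_eta, Fin.mk_one, Fin.reduceFinMk,
      EuclideanSpace.norm_sq_eq, Real.norm_eq_abs, sq_abs, Fin.sum_univ_three, PiLp.inner_apply,
      RCLike.inner_apply, Real.ringHom_apply, PiLp.sub_apply, PiLp.smul_apply, smul_eq_mul] <;>
    ring

section InnerProductSpace

variable {E : Type*} [NormedAddCommGroup E] [InnerProductSpace ℝ E]

theorem HasDerivAt.norm {f : ℝ → E} {f' : E} {x : ℝ} (hf : HasDerivAt f f' x) (h0 : f x ≠ 0) :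
    HasDerivAt (fun t => ‖f t‖) (⟪f x, f'⟫ / ‖f x‖) x := by
  have h := hf.norm_sq.sqrt (by positivity)
  simp only [Real.sqrt_sq (norm_nonneg _)] at h
  convert h using 1
  field_simp

noncomputable def laplaceRungeLenz (μ : ℝ) (r v : E) : E :=
  ‖v‖ ^ 2 • r - ⟪r, v⟫ • v - (μ / ‖r‖) • r

theorem hasDerivAt_laplaceRungeLenz {μ : ℝ} {r v : ℝ → E} {t : ℝ}
    (hr : HasDerivAt r (v t) t) (hv : HasDerivAt v (-(μ / ‖r t‖ ^ 3) • r t) t)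
    (h0 : r t ≠ 0) :
    HasDerivAt (fun s => laplaceRungeLenz μ (r s) (v s)) 0 t := by
  have hn : ‖r t‖ ≠ 0 := norm_ne_zero_iff.mpr h0
  have h := ((hv.norm_sq.smul hr).sub ((hr.inner ℝ hv).smul hv)).sub
    (((hasDerivAt_const t μ).div (hr.norm h0) hn).smul hr)
  refine h.congr_deriv ?_
  simp only [inner_smul_right, real_inner_self_eq_norm_sq, real_inner_comm (r t), Pi.div_apply]
  match_scalars <;> field_simp <;> ring

end InnerProductSpace

theorem laplace_runge_lenz_constant_general
    (μ : ℝ) (r : ℝ → EuclideanSpace ℝ (Fin 3))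
    (hr : Differentiable ℝ r) (hr' : Differentiable ℝ (deriv r))
    (hne : ∀ t, r t ≠ 0)
    (hnewton : ∀ t, deriv (deriv r) t = -(μ / ‖r t‖ ^ 3) • r t) :
    ∀ t s : ℝ,
      cross3 (deriv r t) (cross3 (r t) (deriv r t)) - (μ / ‖r t‖) • r t =
      cross3 (deriv r s) (cross3 (r s) (deriv r s)) - (μ / ‖r s‖) • r s := by
  have hderiv (t : ℝ) : HasDerivAt (fun s => laplaceRungeLenz μ (r s) (deriv r s)) 0 t :=
    hasDerivAt_laplaceRungeLenz (hr t).hasDerivAt (hnewton t ▸ (hr' t).hasDerivAt) (hne t)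
  intro t s
  simpa only [laplaceRungeLenz, cross3_self_cross3] using
    is_const_of_deriv_eq_zero (fun t => (hderiv t).differentiableAt) (fun t => (hderiv t).deriv) t s

/-- For a twice differentiable solution of Newton's inverse-square equation
`r'' = -μ r / ‖r‖³`, the Laplace–Runge–Lenz vector
`A = r' × (r × r') - μ r / ‖r‖` is constant. -/
theorem laplace_runge_lenz_constant
    (μ : ℝ) (hμ : 0 < μ) (r : ℝ → EuclideanSpace ℝ (Fin 3))
    (hr : Differentiable ℝ r) (hr' : Differentiable ℝ (deriv r))
    (hne : ∀ t, r t ≠ 0)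
    (hnewton : ∀ t, deriv (deriv r) t = -(μ / ‖r t‖ ^ 3) • r t) :
    ∀ t s : ℝ,
      cross3 (deriv r t) (cross3 (r t) (deriv r t)) - (μ / ‖r t‖) • r t =
      cross3 (deriv r s) (cross3 (r s) (deriv r s)) - (μ / ‖r s‖) • r s :=
  laplace_runge_lenz_constant_general μ r hr hr' hne hnewton
end

section
/- Let m₁, m₂, m₃ > 0 be real numbers. Then the quintic polynomial p(z) = (m₁+m₂)z⁵ + (3m₁+2m₂)z⁴ + (3m₁+m₂)z³ − (m₂+3m₃)z² − (2m₂+3m₃)z − (m₂+m₃) has exactly one positive real root. -/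
/-!
The coefficients of Euler's quintic have signs `+ + + - - -`, a single sign change, so by
Descartes' rule of signs it has at most one positive root. It is negative at `0` and has positive
leading coefficient, so by the intermediate value theorem it has one.
-/

open Polynomial

namespace Polynomial

variable {R : Type*} [CommRing R] [LinearOrder R] [IsStrictOrderedRing R]

theorem subsingleton_pos_isRoot_of_signVariations_le_one {P : R[X]} (hP : P ≠ 0)
    (h : P.signVariations ≤ 1) : {x : R | 0 < x ∧ P.IsRoot x}.Subsingleton := by
  classical
  have hcard : (P.roots.filter (0 < ·)).toFinset.card ≤ 1 := by
    grw [Multiset.toFinset_card_le, ← Multiset.countP_eq_card_filter,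
      roots_countP_pos_le_signVariations, h]
  rintro x ⟨hx, hxP⟩ y ⟨hy, hyP⟩
  exact Finset.card_le_one.mp hcard x (by simp [hP, hx, hxP.eq_zero]) y
    (by simp [hP, hy, hyP.eq_zero])

theorem exists_pos_isRoot_of_coeff_zero_neg_of_leadingCoeff_pos {P : ℝ[X]}
    (h₀ : P.coeff 0 < 0) (hlead : 0 < P.leadingCoeff) : ∃ x, 0 < x ∧ P.IsRoot x := by
  have hdeg : 0 < P.degree := by
    by_contra! hdeg
    rw [eq_C_of_degree_le_zero hdeg, leadingCoeff_C] at hlead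
    exact hlead.not_gt h₀
  obtain ⟨T, hT, hT₀⟩ :=
    (((P.tendsto_atTop_of_leadingCoeff_nonneg hdeg hlead.le).eventually_gt_atTop 0).and
      (Filter.eventually_ge_atTop 0)).exists
  have hsign : (0 : ℝ) ∈ Set.Ioo (P.eval 0) (P.eval T) := ⟨by rwa [← coeff_zero_eq_eval_zero], hT⟩
  obtain ⟨x, ⟨hx, -⟩, hxP⟩ := intermediate_value_Ioo hT₀ P.continuousOn hsign
  exact ⟨x, hx, hxP⟩

end Polynomial

section EulerQuintic

variable (m₁ m₂ m₃ : ℝ)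

noncomputable def eulerQuintic : ℝ[X] :=
  C (m₁ + m₂) * X ^ 5 + C (3 * m₁ + 2 * m₂) * X ^ 4 + C (3 * m₁ + m₂) * X ^ 3
    - C (m₂ + 3 * m₃) * X ^ 2 - C (2 * m₂ + 3 * m₃) * X - C (m₂ + m₃)

theorem eval_eulerQuintic (z : ℝ) :
    (eulerQuintic m₁ m₂ m₃).eval z =
      (m₁ + m₂) * z ^ 5 + (3 * m₁ + 2 * m₂) * z ^ 4 + (3 * m₁ + m₂) * z ^ 3
        - (m₂ + 3 * m₃) * z ^ 2 - (2 * m₂ + 3 * m₃) * z - (m₂ + m₃) := by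
  simp [eulerQuintic]

variable {m₁ m₂ m₃}

theorem degree_eulerQuintic (h : m₁ + m₂ ≠ 0) : (eulerQuintic m₁ m₂ m₃).degree = 5 := by
  unfold eulerQuintic
  compute_degree!

theorem coeffList_eulerQuintic (h : m₁ + m₂ ≠ 0) :
    (eulerQuintic m₁ m₂ m₃).coeffList =
      [m₁ + m₂, 3 * m₁ + 2 * m₂, 3 * m₁ + m₂,
        -(m₂ + 3 * m₃), -(2 * m₂ + 3 * m₃), -(m₂ + m₃)] := by
  rw [coeffList, degree_eulerQuintic h]
  change List.map _ [5, 4, 3, 2, 1, 0] = _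
  simp only [List.map_cons, List.map_nil, List.cons.injEq, eulerQuintic, coeff_sub, coeff_add,
    coeff_C_mul_X_pow, coeff_C_mul_X, coeff_C]
  norm_num

theorem leadingCoeff_eulerQuintic (h : m₁ + m₂ ≠ 0) :
    (eulerQuintic m₁ m₂ m₃).leadingCoeff = m₁ + m₂ := by
  rw [leadingCoeff, natDegree_eq_of_degree_eq_some (degree_eulerQuintic h)]
  simp only [eulerQuintic, coeff_sub, coeff_add, coeff_C_mul_X_pow, coeff_C_mul_X, coeff_C]
  norm_num

theorem coeff_zero_eulerQuintic : (eulerQuintic m₁ m₂ m₃).coeff 0 = -(m₂ + m₃) := by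
  simp [coeff_zero_eq_eval_zero, eval_eulerQuintic]

theorem signVariations_eulerQuintic (h₁ : 0 < m₁) (h₂ : 0 < m₂) (h₃ : 0 < m₃) :
    (eulerQuintic m₁ m₂ m₃).signVariations = 1 := by
  rw [signVariations, coeffList_eulerQuintic (by positivity)]
  simp only [List.map_cons, List.map_nil, sign_pos (by positivity : 0 < m₁ + m₂),
    sign_pos (by positivity : 0 < 3 * m₁ + 2 * m₂), sign_pos (by positivity : 0 < 3 * m₁ + m₂),
    sign_neg (by linarith : -(m₂ + 3 * m₃) < 0), sign_neg (by linarith : -(2 * m₂ + 3 * m₃) < 0),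
    sign_neg (by linarith : -(m₂ + m₃) < 0)]
  rfl

end EulerQuintic

/-- Euler's quintic for the collinear three-body configuration has exactly
one positive real root. -/
theorem euler_quintic_unique_positive_root
    (m₁ m₂ m₃ : ℝ) (h₁ : 0 < m₁) (h₂ : 0 < m₂) (h₃ : 0 < m₃) :
    ∃! z : ℝ, 0 < z ∧
      (m₁ + m₂) * z ^ 5 + (3 * m₁ + 2 * m₂) * z ^ 4 + (3 * m₁ + m₂) * z ^ 3
        - (m₂ + 3 * m₃) * z ^ 2 - (2 * m₂ + 3 * m₃) * z - (m₂ + m₃) = 0 := by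
  simp_rw [← eval_eulerQuintic]
  have hlead : 0 < (eulerQuintic m₁ m₂ m₃).leadingCoeff := by
    rw [leadingCoeff_eulerQuintic (by positivity)]
    positivity
  have hP : eulerQuintic m₁ m₂ m₃ ≠ 0 := leadingCoeff_ne_zero.mp hlead.ne'
  obtain ⟨z, hz, hzP⟩ := exists_pos_isRoot_of_coeff_zero_neg_of_leadingCoeff_pos
    (by rw [coeff_zero_eulerQuintic]; linarith) hlead
  exact ⟨z, ⟨hz, hzP⟩, fun y hy => subsingleton_pos_isRoot_of_signVariations_le_one hP
    (signVariations_eulerQuintic h₁ h₂ h₃).le hy ⟨hz, hzP⟩⟩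
end

section
/- Let G > 0 and m₁, m₂, m₃ > 0, and let p₁, p₂, p₃ ∈ ℂ be pairwise distinct points with m₁p₁ + m₂p₂ + m₃p₃ = 0 and |p_j − p_k| = L for all j ≠ k, where L > 0 (an equilateral configuration with center of mass at the origin). Let ω ∈ ℝ satisfy ω² = G·(m₁+m₂+m₃)/L³, and define q_k(t) = exp(i·ω·t)·p_k for k = 1,2,3. Then each q_k is twice differentiable and satisfies Newton's equations of the three-body problem: q_k''(t) = Σ_{j≠k} G·m_j·(q_j(t) − q_k(t))/|q_j(t) − q_k(t)|³ for all t. -/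
/-!
Newton's acceleration field is homogeneous of degree `-2`, so multiplying a configuration by a
unit complex number `u` multiplies every acceleration by `u`. For an equilateral configuration of
side `L` with center of mass at the origin, all denominators equal `L³` and the center-of-mass
condition turns the acceleration of body `k` into `-(G M / L³) p_k`, with `M` the total mass.
A uniform rotation `e^{iωt} p_k` has acceleration `-ω² e^{iωt} p_k`, and these match exactly
when `ω² = G M / L³`.
-/

open Complex Finset

section Gravitation

variable {ι : Type*} [Fintype ι] [DecidableEq ι]

noncomputable def gravitationalAccel (G : ℝ) (m : ι → ℝ) (p : ι → ℂ) (k : ι) : ℂ :=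
  ∑ j ∈ univ.erase k, ((G * m j : ℝ) : ℂ) * (p j - p k) / ((‖p j - p k‖ : ℝ) : ℂ) ^ 3

theorem gravitationalAccel_const_mul (G : ℝ) (m : ι → ℝ) (p : ι → ℂ) (k : ι) (u : ℂ) :
    gravitationalAccel G m (fun j => u * p j) k
      = u / ((‖u‖ : ℝ) : ℂ) ^ 3 * gravitationalAccel G m p k := by
  simp only [gravitationalAccel, mul_sum, ← mul_sub, norm_mul, ofReal_mul]
  refine sum_congr rfl fun j _ => ?_
  ring

theorem gravitationalAccel_of_equilateral (G : ℝ) (m : ι → ℝ) (p : ι → ℂ) (L : ℝ)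
    (hside : ∀ j k, j ≠ k → ‖p j - p k‖ = L) (hcom : ∑ j, (m j : ℂ) * p j = 0) (k : ι) :
    gravitationalAccel G m p k = -((G * ∑ j, m j : ℝ) / (L : ℂ) ^ 3) * p k := by
  have hterm : ∀ j ∈ univ.erase k, ((G * m j : ℝ) : ℂ) * (p j - p k) / ((‖p j - p k‖ : ℝ) : ℂ) ^ 3
      = (G : ℂ) / (L : ℂ) ^ 3 * ((m j : ℂ) * p j - m j * p k) := by
    intro j hj
    rw [hside j k (ne_of_mem_erase hj)]
    push_cast
    ring
  rw [gravitationalAccel, sum_congr rfl hterm, ← mul_sum,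
    sum_erase _ (by rw [sub_self]), sum_sub_distrib, hcom, ← sum_mul]
  push_cast
  ring

end Gravitation

theorem hasDerivAt_cexp_mul_ofReal_mul (c z : ℂ) (t : ℝ) :
    HasDerivAt (fun s : ℝ => cexp (c * s) * z) (cexp (c * t) * (c * z)) t := by
  refine (((hasDerivAt_id (t : ℂ)).const_mul c).cexp.mul_const z).comp_ofReal.congr_deriv ?_
  simp only [id, mul_one]
  ring

theorem deriv_cexp_mul_ofReal_mul (c z : ℂ) :
    deriv (fun s : ℝ => cexp (c * s) * z) = fun s : ℝ => cexp (c * s) * (c * z) :=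
  funext fun t => (hasDerivAt_cexp_mul_ofReal_mul c z t).deriv

theorem differentiable_cexp_mul_ofReal_mul (c z : ℂ) :
    Differentiable ℝ (fun s : ℝ => cexp (c * s) * z) :=
  fun t => (hasDerivAt_cexp_mul_ofReal_mul c z t).differentiableAt

theorem lagrange_equilateral_solution_general
    (G : ℝ) (m : Fin 3 → ℝ)
    (p : Fin 3 → ℂ)
    (hcom : (m 0 : ℂ) * p 0 + (m 1 : ℂ) * p 1 + (m 2 : ℂ) * p 2 = 0)
    (L : ℝ)
    (hside : ∀ j k, j ≠ k → ‖p j - p k‖ = L)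
    (ω : ℝ) (hω : ω ^ 2 = G * (m 0 + m 1 + m 2) / L ^ 3)
    (q : Fin 3 → ℝ → ℂ)
    (hq : ∀ k t, q k t = Complex.exp (Complex.I * (ω * t)) * p k) :
    ∀ k, Differentiable ℝ (q k) ∧ Differentiable ℝ (deriv (q k)) ∧
      ∀ t, deriv (deriv (q k)) t =
        ∑ j ∈ Finset.univ.erase k,
          ((G * m j : ℝ) : ℂ) * (q j t - q k t) /
            ((‖q j t - q k t‖ : ℝ) : ℂ) ^ 3 := by
  have hrot : ∀ k, q k = fun t : ℝ => cexp (I * ω * t) * p k :=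
    fun k => funext fun t => by rw [hq, mul_assoc]
  have hcom_sum : ∑ j, (m j : ℂ) * p j = 0 := by rwa [Fin.sum_univ_three]
  have hrate : (I * ω) * (I * ω) = -((G * ∑ j, m j : ℝ) / (L : ℂ) ^ 3) := by
    have h : ((ω ^ 2 : ℝ) : ℂ) = ((G * (m 0 + m 1 + m 2) / L ^ 3 : ℝ) : ℂ) := congrArg _ hω
    push_cast at h
    rw [Fin.sum_univ_three]
    push_cast
    linear_combination (ω : ℂ) ^ 2 * I_sq - h
  intro k
  refine ⟨?_, ?_, fun t => ?_⟩
  · rw [hrot]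
    exact differentiable_cexp_mul_ofReal_mul _ _
  · rw [hrot, deriv_cexp_mul_ofReal_mul]
    exact differentiable_cexp_mul_ofReal_mul _ _
  · have hunit : ‖cexp (I * ω * t)‖ = 1 := by
      rw [mul_comm I, mul_right_comm, ← ofReal_mul, norm_exp_ofReal_mul_I]
    change _ = gravitationalAccel G m (fun j => q j t) k
    simp only [hrot]
    rw [deriv_cexp_mul_ofReal_mul, deriv_cexp_mul_ofReal_mul, gravitationalAccel_const_mul,
      hunit, ofReal_one, one_pow, div_one,
      gravitationalAccel_of_equilateral G m p L hside hcom_sum k]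
    linear_combination cexp (I * ω * t) * p k * hrate

/-- Lagrange's equilateral solution of the three-body problem: if three
masses form an equilateral triangle of side `L` with center of mass at the
origin and rotate rigidly with angular velocity `ω` where
`ω² = G(m₁+m₂+m₃)/L³`, then each body satisfies Newton's equations. -/
theorem lagrange_equilateral_solution
    (G : ℝ) (hG : 0 < G) (m : Fin 3 → ℝ) (hm : ∀ k, 0 < m k)
    (p : Fin 3 → ℂ) (hdist : ∀ j k, j ≠ k → p j ≠ p k)
    (hcom : (m 0 : ℂ) * p 0 + (m 1 : ℂ) * p 1 + (m 2 : ℂ) * p 2 = 0)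
    (L : ℝ) (hL : 0 < L)
    (hside : ∀ j k, j ≠ k → ‖p j - p k‖ = L)
    (ω : ℝ) (hω : ω ^ 2 = G * (m 0 + m 1 + m 2) / L ^ 3)
    (q : Fin 3 → ℝ → ℂ)
    (hq : ∀ k t, q k t = Complex.exp (Complex.I * (ω * t)) * p k) :
    ∀ k, Differentiable ℝ (q k) ∧ Differentiable ℝ (deriv (q k)) ∧
      ∀ t, deriv (deriv (q k)) t =
        ∑ j ∈ Finset.univ.erase k,
          ((G * m j : ℝ) : ℂ) * (q j t - q k t) /
            ((‖q j t - q k t‖ : ℝ) : ℂ) ^ 3 :=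
  lagrange_equilateral_solution_general G m p hcom L hside ω hω q hq
end

section
/- Let G > 0, m > 0, M > 0, d > 0, and let ω ∈ ℝ satisfy ω² = G·(M + m/4)/d³. Define q₁(t) = exp(i·ω·t)·d, q₂(t) = 0, and q₃(t) = −exp(i·ω·t)·d in ℂ, corresponding to masses m, M, m respectively. Then these curves satisfy Newton's equations of the three-body problem: for each k, q_k''(t) = Σ_{j≠k} G·m_j·(q_j(t) − q_k(t))/|q_j(t) − q_k(t)|³ for all t. -/
/-!
The outer bodies move uniformly on the circle of radius `d`, so their acceleration is the
centripetal `-ω² q`. Both outer bodies pull the centre equally in opposite directions, and each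
outer body is pulled towards the centre by `GM/d²` from the centre and `Gm/(2d)²` from the other
outer body, which is exactly `ω² d` by the choice of `ω`.
-/

open Complex

theorem hasDerivAt_exp_I_mul_ofReal_mul (ω : ℝ) (z : ℂ) (t : ℝ) :
    HasDerivAt (fun s : ℝ => exp (I * (ω * s)) * z) (I * ω * (exp (I * (ω * t)) * z)) t := by
  have hphase : HasDerivAt (fun s : ℝ => I * (ω * (s : ℂ))) (I * ω) t := by
    simpa [mul_assoc] using ((hasDerivAt_id t).ofReal_comp).const_mul (I * (ω : ℂ))
  simpa [mul_comm, mul_assoc, mul_left_comm] using hphase.cexp.mul_const z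

theorem deriv_deriv_exp_I_mul_ofReal_mul (ω : ℝ) (z : ℂ) (t : ℝ) :
    deriv (deriv fun s : ℝ => exp (I * (ω * s)) * z) t =
      -(ω : ℂ) ^ 2 * (exp (I * (ω * t)) * z) := by
  have hfirst : deriv (fun s : ℝ => exp (I * (ω * s)) * z) =
      fun s : ℝ => exp (I * (ω * s)) * (I * ω * z) := by
    funext s
    rw [(hasDerivAt_exp_I_mul_ofReal_mul ω z s).deriv]
    ring
  rw [hfirst, (hasDerivAt_exp_I_mul_ofReal_mul ω (I * ω * z) t).deriv]
  linear_combination (ω : ℂ) ^ 2 * (exp (I * (ω * t)) * z) * I_sq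

theorem mul_ofReal_div_norm_pow_three {r : ℝ} (hr : 0 < r) (k : ℝ) {u : ℂ}
    (hu : ‖u‖ = 1) :
    (k : ℂ) * (u * r) / ((‖u * (r : ℂ)‖ : ℝ) : ℂ) ^ 3 = ((k / r ^ 2 : ℝ) : ℂ) * u := by
  rw [norm_mul, hu, norm_real, Real.norm_of_nonneg hr.le, one_mul]
  have : (r : ℂ) ≠ 0 := by exact_mod_cast hr.ne'
  push_cast
  field_simp

theorem centripetal_eq_attraction_of_norm_eq_one {G m M d ω : ℝ} (hd : 0 < d)
    (hω : ω ^ 2 = G * (M + m / 4) / d ^ 3) {u : ℂ} (hu : ‖u‖ = 1) :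
    -(ω : ℂ) ^ 2 * (u * d) =
      ((G * M : ℝ) : ℂ) * (0 - u * d) / ((‖0 - u * d‖ : ℝ) : ℂ) ^ 3 +
      ((G * m : ℝ) : ℂ) * (-(u * d) - u * d) / ((‖-(u * d) - u * d‖ : ℝ) : ℂ) ^ 3 := by
  have hnu : ‖-u‖ = 1 := by rw [norm_neg, hu]
  have hdC : (d : ℂ) ≠ 0 := mod_cast hd.ne'
  have hωC : (ω : ℂ) ^ 2 = G * (M + m / 4) / d ^ 3 := mod_cast hω
  rw [show (0 : ℂ) - u * d = -u * (d : ℝ) by ring,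
    show -(u * d) - u * d = -u * ((2 * d : ℝ) : ℂ) by push_cast; ring,
    mul_ofReal_div_norm_pow_three hd _ hnu,
    mul_ofReal_div_norm_pow_three (by positivity) _ hnu, hωC]
  push_cast
  field_simp
  ring

theorem euler_collinear_solution_general
    (G m M d ω : ℝ) (hd : 0 < d)
    (hω : ω ^ 2 = G * (M + m / 4) / d ^ 3)
    (q₁ q₂ q₃ : ℝ → ℂ)
    (h₁ : ∀ t, q₁ t = Complex.exp (Complex.I * (ω * t)) * (d : ℂ))
    (h₂ : ∀ t, q₂ t = 0)
    (h₃ : ∀ t, q₃ t = -(Complex.exp (Complex.I * (ω * t)) * (d : ℂ))) :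
    ∀ t : ℝ,
      (deriv (deriv q₁) t =
        ((G * M : ℝ) : ℂ) * (q₂ t - q₁ t) /
          ((‖q₂ t - q₁ t‖ : ℝ) : ℂ) ^ 3 +
        ((G * m : ℝ) : ℂ) * (q₃ t - q₁ t) /
          ((‖q₃ t - q₁ t‖ : ℝ) : ℂ) ^ 3) ∧
      (deriv (deriv q₂) t =
        ((G * m : ℝ) : ℂ) * (q₁ t - q₂ t) /
          ((‖q₁ t - q₂ t‖ : ℝ) : ℂ) ^ 3 +
        ((G * m : ℝ) : ℂ) * (q₃ t - q₂ t) /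
          ((‖q₃ t - q₂ t‖ : ℝ) : ℂ) ^ 3) ∧
      (deriv (deriv q₃) t =
        ((G * m : ℝ) : ℂ) * (q₁ t - q₃ t) /
          ((‖q₁ t - q₃ t‖ : ℝ) : ℂ) ^ 3 +
        ((G * M : ℝ) : ℂ) * (q₂ t - q₃ t) /
          ((‖q₂ t - q₃ t‖ : ℝ) : ℂ) ^ 3) := by
  intro t
  have hq₁ : deriv (deriv q₁) t = -(ω : ℂ) ^ 2 * (exp (I * (ω * t)) * d) := by
    rw [funext h₁]
    exact deriv_deriv_exp_I_mul_ofReal_mul ω d t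
  have hq₂ : deriv (deriv q₂) t = 0 := by simp [funext h₂]
  have hq₃ : deriv (deriv q₃) t = -(ω : ℂ) ^ 2 * (exp (I * (ω * t)) * (-d : ℝ)) := by
    rw [show q₃ = fun s : ℝ => exp (I * (ω * s)) * ((-d : ℝ) : ℂ) by
      funext s; rw [h₃]; push_cast; ring]
    exact deriv_deriv_exp_I_mul_ofReal_mul ω (-d : ℝ) t
  simp only [h₁, h₂, h₃, hq₁, hq₂, hq₃]
  set e := exp (I * (ω * t))
  have he : ‖e‖ = 1 := by simpa using norm_exp_I_mul_ofReal (ω * t)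
  refine ⟨centripetal_eq_attraction_of_norm_eq_one hd hω he, ?_, ?_⟩
  · rw [sub_zero, sub_zero, neg_mul_eq_neg_mul,
      mul_ofReal_div_norm_pow_three hd _ he,
      mul_ofReal_div_norm_pow_three hd _ (by rwa [norm_neg])]
    push_cast
    ring
  · simpa [add_comm] using
      centripetal_eq_attraction_of_norm_eq_one hd hω (u := -e) (by rwa [norm_neg])

/-- Euler's symmetric collinear solution of the three-body problem: two equal
masses `m` at distance `d` on either side of a central mass `M`, rotating
rigidly with `ω² = G(M + m/4)/d³`, satisfy Newton's equations. -/
theorem euler_collinear_solution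
    (G m M d ω : ℝ) (hG : 0 < G) (hm : 0 < m) (hM : 0 < M) (hd : 0 < d)
    (hω : ω ^ 2 = G * (M + m / 4) / d ^ 3)
    (q₁ q₂ q₃ : ℝ → ℂ)
    (h₁ : ∀ t, q₁ t = Complex.exp (Complex.I * (ω * t)) * (d : ℂ))
    (h₂ : ∀ t, q₂ t = 0)
    (h₃ : ∀ t, q₃ t = -(Complex.exp (Complex.I * (ω * t)) * (d : ℂ))) :
    ∀ t : ℝ,
      (deriv (deriv q₁) t =
        ((G * M : ℝ) : ℂ) * (q₂ t - q₁ t) /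
          ((‖q₂ t - q₁ t‖ : ℝ) : ℂ) ^ 3 +
        ((G * m : ℝ) : ℂ) * (q₃ t - q₁ t) /
          ((‖q₃ t - q₁ t‖ : ℝ) : ℂ) ^ 3) ∧
      (deriv (deriv q₂) t =
        ((G * m : ℝ) : ℂ) * (q₁ t - q₂ t) /
          ((‖q₁ t - q₂ t‖ : ℝ) : ℂ) ^ 3 +
        ((G * m : ℝ) : ℂ) * (q₃ t - q₂ t) /
          ((‖q₃ t - q₂ t‖ : ℝ) : ℂ) ^ 3) ∧
      (deriv (deriv q₃) t =
        ((G * m : ℝ) : ℂ) * (q₁ t - q₃ t) /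
          ((‖q₁ t - q₃ t‖ : ℝ) : ℂ) ^ 3 +
        ((G * M : ℝ) : ℂ) * (q₂ t - q₃ t) /
          ((‖q₂ t - q₃ t‖ : ℝ) : ℂ) ^ 3) :=
  euler_collinear_solution_general G m M d ω hd hω q₁ q₂ q₃ h₁ h₂ h₃
end

section
/- Let u, v, w be unit vectors in ℝ³ such that v is not parallel to u and w is not parallel to u, and let P v = v − ⟨v,u⟩·u and P w = w − ⟨w,u⟩·u denote the components of v and w orthogonal to u. Then cos(∠(v,w)) = cos(∠(u,v))·cos(∠(u,w)) + sin(∠(u,v))·sin(∠(u,w))·cos(∠(P v, P w)), where ∠(a,b) denotes the angle between nonzero vectors a and b. (This is the spherical law of cosines for the spherical triangle with vertices u, v, w on the unit sphere.) -/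
open scoped RealInnerProductSpace
open InnerProductGeometry

/-!
Split `v` and `w` along the unit vector `u` and its orthogonal complement:
`⟪v, w⟫ = ⟪u, v⟫ ⟪u, w⟫ + ⟪Pv, Pw⟫`. For unit vectors the inner products on the left and in
the first term are the cosines of the sides, the complementary components have lengths
`‖Pv‖ = sin ∠(u, v)` and `‖Pw‖ = sin ∠(u, w)`, and `⟪Pv, Pw⟫ = ‖Pv‖ ‖Pw‖ cos ∠(Pv, Pw)`.
-/

section UnitVectorDecomposition

variable {V : Type*} [NormedAddCommGroup V] [InnerProductSpace ℝ V] {u : V}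

theorem inner_sub_inner_smul_sub_inner_smul (hu : ‖u‖ = 1) (v w : V) :
    ⟪v - ⟪v, u⟫ • u, w - ⟪w, u⟫ • u⟫ = ⟪v, w⟫ - ⟪u, v⟫ * ⟪u, w⟫ := by
  have huu : ⟪u, u⟫ = 1 := by rw [real_inner_self_eq_norm_sq, hu, one_pow]
  simp only [inner_sub_left, inner_sub_right, real_inner_smul_left, real_inner_smul_right, huu,
    real_inner_comm u v, real_inner_comm u w]
  ring

theorem norm_sub_inner_smul_eq_norm_mul_sin_angle (hu : ‖u‖ = 1) (v : V) :
    ‖v - ⟪v, u⟫ • u‖ = ‖v‖ * Real.sin (angle u v) := by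
  have hcos : Real.cos (angle u v) * ‖v‖ = ⟪u, v⟫ := by
    simpa [hu] using cos_angle_mul_norm_mul_norm u v
  refine (sq_eq_sq₀ (norm_nonneg _) (mul_nonneg (norm_nonneg _) (sin_angle_nonneg u v))).1 ?_
  rw [← real_inner_self_eq_norm_sq, inner_sub_inner_smul_sub_inner_smul hu, ← hcos,
    real_inner_self_eq_norm_sq, mul_pow, Real.sin_sq]
  ring

theorem cos_angle_eq_cos_mul_cos_add_sin_mul_sin_mul_cos (hu : ‖u‖ = 1) {v w : V}
    (hv : ‖v‖ = 1) (hw : ‖w‖ = 1) :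
    Real.cos (angle v w) =
      Real.cos (angle u v) * Real.cos (angle u w) + Real.sin (angle u v) * Real.sin (angle u w) *
        Real.cos (angle (v - ⟪v, u⟫ • u) (w - ⟪w, u⟫ • u)) := by
  have hsin : ∀ x : V, ‖x‖ = 1 → Real.sin (angle u x) = ‖x - ⟪x, u⟫ • u‖ := fun x hx => by
    rw [norm_sub_inner_smul_eq_norm_mul_sin_angle hu, hx, one_mul]
  rw [hsin v hv, hsin w hw, mul_comm (‖_‖ * ‖_‖), cos_angle_mul_norm_mul_norm,
    inner_sub_inner_smul_sub_inner_smul hu, ← inner_eq_cos_angle_of_norm_eq_one hu hv,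
    ← inner_eq_cos_angle_of_norm_eq_one hu hw, ← inner_eq_cos_angle_of_norm_eq_one hv hw]
  ring

end UnitVectorDecomposition

theorem spherical_law_of_cosines_general
    (u v w : EuclideanSpace ℝ (Fin 3))
    (hu : ‖u‖ = 1) (hv : ‖v‖ = 1) (hw : ‖w‖ = 1)
    (Pv Pw : EuclideanSpace ℝ (Fin 3))
    (hPv : Pv = v - ⟪v, u⟫ • u) (hPw : Pw = w - ⟪w, u⟫ • u) :
    Real.cos (angle v w) =
      Real.cos (angle u v) * Real.cos (angle u w) +
      Real.sin (angle u v) * Real.sin (angle u w) * Real.cos (angle Pv Pw) := by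
  subst hPv hPw
  exact cos_angle_eq_cos_mul_cos_add_sin_mul_sin_mul_cos hu hv hw

/-- The spherical law of cosines for the spherical triangle with vertices
`u`, `v`, `w` on the unit sphere of `ℝ³`:
`cos(∠(v,w)) = cos(∠(u,v))·cos(∠(u,w)) + sin(∠(u,v))·sin(∠(u,w))·cos(∠(Pv,Pw))`,
where `Pv`, `Pw` are the components of `v`, `w` orthogonal to `u`. -/
theorem spherical_law_of_cosines
    (u v w : EuclideanSpace ℝ (Fin 3))
    (hu : ‖u‖ = 1) (hv : ‖v‖ = 1) (hw : ‖w‖ = 1)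
    (hvu : ∀ c : ℝ, v ≠ c • u) (hwu : ∀ c : ℝ, w ≠ c • u)
    (Pv Pw : EuclideanSpace ℝ (Fin 3))
    (hPv : Pv = v - ⟪v, u⟫ • u) (hPw : Pw = w - ⟪w, u⟫ • u) :
    Real.cos (angle v w) =
      Real.cos (angle u v) * Real.cos (angle u w) +
      Real.sin (angle u v) * Real.sin (angle u w) * Real.cos (angle Pv Pw) :=
  spherical_law_of_cosines_general u v w hu hv hw Pv Pw hPv hPw
end
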